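/- Assume Axioms A3 and A4 hold with uniform convergence on compact sets, and assume that for every x ∈ X the function d^x is a nondegenerate distance (d^x(v, w) = 0 implies v = w). Then for each x, u the map Δ^x(u, ·) is invertible; denoting its inverse by Σ^x(u, ·), one has Σ_ε^x(u, v) → Σ^x(u, v) as ε → 0+, uniformly with respect to x, u, v in compact sets, and each Σ^x(u, ·) is a d^x-isometry: d^x(Σ^x(u, v), Σ^x(u, w)) = d^x(v, w) for all v, w. -/

import Mathlib

/-!
Writing `y = δ_ε^x u`, the dilation laws give `Σ_ε^x(u, v) = Δ_ε^y(Δ_ε^x(u, x), v)`, and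
`y → x` because `d(y, x) = ε · (d(δ_ε^x u, δ_ε^x x) / ε)` with the second factor bounded by A3.
Uniform convergence on compacts of continuous maps is the same as joint convergence in
`(ε, p)` towards a continuous limit, and joint limits compose, so `Σ_ε^x(u, ·)` converges
to `Δ^x(Δ^x(u, x), ·)`. The exact identities `Δ_ε^x(u, Σ_ε^x(u, v)) = v = Σ_ε^x(u, Δ_ε^x(u, v))`
and `d(δ_ε^y Δ_ε^x(u, v), δ_ε^y Δ_ε^x(u, w)) = d(δ_ε^x v, δ_ε^x w)` pass to the limit and give
invertibility and the isometry property.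
-/

open Filter Topology Function

theorem tendstoLocallyUniformly_iff_forall_tendsto_uncurry {ι α β : Type*}
    [TopologicalSpace α] [UniformSpace β] {F : ι → α → β} {f : α → β} {p : Filter ι}
    (hf : Continuous f) :
    TendstoLocallyUniformly F f p ↔ ∀ x, Tendsto (uncurry F) (p ×ˢ 𝓝 x) (𝓝 (f x)) := by
  refine ⟨fun h x => ?_, fun h => tendstoLocallyUniformly_iff_forall_tendsto.2 fun x => ?_⟩
  · refine tendsto_comp_of_locally_uniform_limit (F := fun n : ι × α => F n.1)
      hf.continuousAt tendsto_snd fun u hu => ?_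
    obtain ⟨t, ht, hev⟩ := h u hu x
    exact ⟨t, ht, hev.prod_inl _⟩
  · exact (((hf.tendsto x).comp tendsto_snd).prodMk_nhds (h x)).mono_right (nhds_le_uniformity _)

theorem tendsto_prodMap_id_nhds {ι α β : Type*} [TopologicalSpace α] [TopologicalSpace β]
    {l : Filter ι} {g : α → β} (hg : Continuous g) (a : α) :
    Tendsto (fun q : ι × α => (q.1, g q.2)) (l ×ˢ 𝓝 a) (l ×ˢ 𝓝 (g a)) :=
  tendsto_fst.prodMk ((hg.tendsto a).comp tendsto_snd)

theorem eq_of_tendsto_uncurry_of_eventually_eq {ι α : Type*} [TopologicalSpace α] [T2Space α]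
    {l : Filter ι} [l.NeBot] {F G : ι → α × α × α → α} {f g : α × α × α → α}
    (hF : ∀ p, Tendsto (uncurry F) (l ×ˢ 𝓝 p) (𝓝 (f p)))
    (hG : ∀ p, Tendsto (uncurry G) (l ×ˢ 𝓝 p) (𝓝 (g p)))
    (hFG : ∀ᶠ i in l, ∀ x u v, F i (x, u, G i (x, u, v)) = v) (x u v : α) :
    f (x, u, g (x, u, v)) = v := by
  have hGp : Tendsto (fun i => G i (x, u, v)) l (𝓝 (g (x, u, v))) :=
    (hG _).comp (tendsto_id.prodMk tendsto_const_nhds)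
  have hinner : Tendsto (fun i => (i, (x, u, G i (x, u, v)))) l (l ×ˢ 𝓝 (x, u, g (x, u, v))) :=
    tendsto_id.prodMk (tendsto_const_nhds.prodMk_nhds (tendsto_const_nhds.prodMk_nhds hGp))
  exact tendsto_nhds_unique ((hF _).comp hinner)
    (tendsto_const_nhds.congr' (hFG.mono fun i h => (h x u v).symm))

section DilationStructure

variable {X : Type*} {δ : ℝ → X → X → X}

noncomputable def rescaledDist [Dist X] (δ : ℝ → X → X → X) (ε : ℝ) (p : X × X × X) : ℝ :=
  (1 / ε) * dist (δ ε p.1 p.2.1) (δ ε p.1 p.2.2)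

/-- `Δ_ε^x(u, v)` at `p = (x, u, v)`. -/
noncomputable def approxDiff (δ : ℝ → X → X → X) (ε : ℝ) (p : X × X × X) : X :=
  δ ε⁻¹ (δ ε p.1 p.2.1) (δ ε p.1 p.2.2)

/-- `Σ_ε^x(u, v)` at `p = (x, u, v)`. -/
noncomputable def approxSum (δ : ℝ → X → X → X) (ε : ℝ) (p : X × X × X) : X :=
  δ ε⁻¹ p.1 (δ ε (δ ε p.1 p.2.1) p.2.2)

theorem dilation_inv_dilation
    (hcomp : ∀ ε μ : ℝ, 0 < ε → 0 < μ → ∀ x y : X, δ ε x (δ μ x y) = δ (ε * μ) x y)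
    (hone : ∀ x y : X, δ 1 x y = y) {ε : ℝ} (hε : 0 < ε) (x y : X) :
    δ ε⁻¹ x (δ ε x y) = y := by
  rw [hcomp _ _ (inv_pos.2 hε) hε, inv_mul_cancel₀ hε.ne', hone]

theorem dilation_dilation_inv
    (hcomp : ∀ ε μ : ℝ, 0 < ε → 0 < μ → ∀ x y : X, δ ε x (δ μ x y) = δ (ε * μ) x y)
    (hone : ∀ x y : X, δ 1 x y = y) {ε : ℝ} (hε : 0 < ε) (x y : X) :
    δ ε x (δ ε⁻¹ x y) = y := by
  rw [hcomp _ _ hε (inv_pos.2 hε), mul_inv_cancel₀ hε.ne', hone]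

theorem approxDiff_approxSum
    (hcomp : ∀ ε μ : ℝ, 0 < ε → 0 < μ → ∀ x y : X, δ ε x (δ μ x y) = δ (ε * μ) x y)
    (hone : ∀ x y : X, δ 1 x y = y) {ε : ℝ} (hε : 0 < ε) (x u v : X) :
    approxDiff δ ε (x, u, approxSum δ ε (x, u, v)) = v := by
  simp only [approxDiff, approxSum]
  rw [dilation_dilation_inv hcomp hone hε, dilation_inv_dilation hcomp hone hε]

theorem approxSum_approxDiff
    (hcomp : ∀ ε μ : ℝ, 0 < ε → 0 < μ → ∀ x y : X, δ ε x (δ μ x y) = δ (ε * μ) x y)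
    (hone : ∀ x y : X, δ 1 x y = y) {ε : ℝ} (hε : 0 < ε) (x u v : X) :
    approxSum δ ε (x, u, approxDiff δ ε (x, u, v)) = v := by
  simp only [approxDiff, approxSum]
  rw [dilation_dilation_inv hcomp hone hε, dilation_inv_dilation hcomp hone hε]

theorem approxSum_eq_approxDiff
    (hcomp : ∀ ε μ : ℝ, 0 < ε → 0 < μ → ∀ x y : X, δ ε x (δ μ x y) = δ (ε * μ) x y)
    (hone : ∀ x y : X, δ 1 x y = y) (hfix : ∀ ε : ℝ, 0 < ε → ∀ x : X, δ ε x x = x)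
    {ε : ℝ} (hε : 0 < ε) (x u v : X) :
    approxSum δ ε (x, u, v) = approxDiff δ ε (δ ε x u, approxDiff δ ε (x, u, x), v) := by
  simp only [approxDiff, approxSum]
  rw [hfix ε hε, dilation_dilation_inv hcomp hone hε]

theorem rescaledDist_approxDiff [Dist X]
    (hcomp : ∀ ε μ : ℝ, 0 < ε → 0 < μ → ∀ x y : X, δ ε x (δ μ x y) = δ (ε * μ) x y)
    (hone : ∀ x y : X, δ 1 x y = y) {ε : ℝ} (hε : 0 < ε) (x a v w : X) :
    rescaledDist δ ε (δ ε x a, approxDiff δ ε (x, a, v), approxDiff δ ε (x, a, w)) =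
      rescaledDist δ ε (x, v, w) := by
  simp only [rescaledDist, approxDiff]
  rw [dilation_dilation_inv hcomp hone hε, dilation_dilation_inv hcomp hone hε]

theorem continuous_dilation [TopologicalSpace X]
    (hcont : ContinuousOn (fun p : ℝ × X × X => δ p.1 p.2.1 p.2.2) {p | 0 < p.1})
    {ε : ℝ} (hε : 0 < ε) : Continuous (fun q : X × X => δ ε q.1 q.2) :=
  hcont.comp_continuous (continuous_const.prodMk continuous_id) fun _ => hε

theorem continuous_rescaledDist [MetricSpace X]
    (hcont : ContinuousOn (fun p : ℝ × X × X => δ p.1 p.2.1 p.2.2) {p | 0 < p.1})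
    {ε : ℝ} (hε : 0 < ε) : Continuous (rescaledDist δ ε) := by
  have h := continuous_dilation hcont hε
  unfold rescaledDist
  fun_prop

theorem continuous_approxDiff [TopologicalSpace X]
    (hcont : ContinuousOn (fun p : ℝ × X × X => δ p.1 p.2.1 p.2.2) {p | 0 < p.1})
    {ε : ℝ} (hε : 0 < ε) : Continuous (approxDiff δ ε) := by
  have h := continuous_dilation hcont hε
  have hinv := continuous_dilation hcont (inv_pos.2 hε)
  unfold approxDiff
  fun_prop

variable [MetricSpace X]

theorem tendsto_dilation_of_rescaledDist (hfix : ∀ ε : ℝ, 0 < ε → ∀ x : X, δ ε x x = x)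
    {dx : X → X → X → ℝ}
    (hA3 : ∀ p, Tendsto (uncurry (rescaledDist δ)) (𝓝[>] 0 ×ˢ 𝓝 p) (𝓝 (dx p.1 p.2.1 p.2.2)))
    (p : X × X × X) :
    Tendsto (fun q : ℝ × X × X × X => δ q.1 q.2.1 q.2.2.1) (𝓝[>] 0 ×ˢ 𝓝 p) (𝓝 p.1) := by
  have hε : Tendsto (fun q : ℝ × X × X × X => q.1) (𝓝[>] 0 ×ˢ 𝓝 p) (𝓝 0) :=
    tendsto_fst.mono_right nhdsWithin_le_nhds
  have hscaled := (hA3 _).comp (tendsto_prodMap_id_nhds (l := 𝓝[>] (0 : ℝ))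
    (g := fun q : X × X × X => (q.1, q.2.1, q.1)) (by fun_prop) p)
  have hdist : Tendsto (fun q : ℝ × X × X × X => dist q.2.1 (δ q.1 q.2.1 q.2.2.1))
      (𝓝[>] 0 ×ˢ 𝓝 p) (𝓝 0) := by
    refine (zero_mul (dx p.1 p.2.1 p.1) ▸ hε.mul hscaled).congr' ?_
    filter_upwards [eventually_mem_nhdsWithin.prod_inl _] with q (hq : 0 < q.1)
    simp only [comp_apply, uncurry_apply_pair, rescaledDist, hfix _ hq]
    rw [dist_comm, ← mul_assoc, mul_one_div_cancel hq.ne', one_mul]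
  exact ((continuous_fst.tendsto p).comp tendsto_snd).congr_dist hdist

theorem tendsto_approxSum
    (hcomp : ∀ ε μ : ℝ, 0 < ε → 0 < μ → ∀ x y : X, δ ε x (δ μ x y) = δ (ε * μ) x y)
    (hone : ∀ x y : X, δ 1 x y = y) (hfix : ∀ ε : ℝ, 0 < ε → ∀ x : X, δ ε x x = x)
    {dx : X → X → X → ℝ} {ΔL : X → X → X → X}
    (hA3 : ∀ p, Tendsto (uncurry (rescaledDist δ)) (𝓝[>] 0 ×ˢ 𝓝 p) (𝓝 (dx p.1 p.2.1 p.2.2)))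
    (hA4 : ∀ p, Tendsto (uncurry (approxDiff δ)) (𝓝[>] 0 ×ˢ 𝓝 p) (𝓝 (ΔL p.1 p.2.1 p.2.2)))
    (p : X × X × X) :
    Tendsto (uncurry (approxSum δ)) (𝓝[>] 0 ×ˢ 𝓝 p) (𝓝 (ΔL p.1 (ΔL p.1 p.2.1 p.1) p.2.2)) := by
  have hdiff := (hA4 _).comp (tendsto_prodMap_id_nhds (l := 𝓝[>] (0 : ℝ))
    (g := fun q : X × X × X => (q.1, q.2.1, q.1)) (by fun_prop) p)
  have hinner : Tendsto
      (fun q : ℝ × X × X × X =>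
        (q.1, δ q.1 q.2.1 q.2.2.1, approxDiff δ q.1 (q.2.1, q.2.2.1, q.2.1), q.2.2.2))
      (𝓝[>] 0 ×ˢ 𝓝 p) (𝓝[>] 0 ×ˢ 𝓝 (p.1, ΔL p.1 p.2.1 p.1, p.2.2)) :=
    tendsto_fst.prodMk ((tendsto_dilation_of_rescaledDist hfix hA3 p).prodMk_nhds
      (hdiff.prodMk_nhds ((continuous_snd.snd.tendsto p).comp tendsto_snd)))
  refine ((hA4 _).comp hinner).congr' ?_
  filter_upwards [eventually_mem_nhdsWithin.prod_inl _] with q (hq : 0 < q.1)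
  exact (approxSum_eq_approxDiff hcomp hone hfix hq _ _ _).symm

theorem dist_limit_approxDiff_eq
    (hcomp : ∀ ε μ : ℝ, 0 < ε → 0 < μ → ∀ x y : X, δ ε x (δ μ x y) = δ (ε * μ) x y)
    (hone : ∀ x y : X, δ 1 x y = y) (hfix : ∀ ε : ℝ, 0 < ε → ∀ x : X, δ ε x x = x)
    {dx : X → X → X → ℝ} {ΔL : X → X → X → X}
    (hA3 : ∀ p, Tendsto (uncurry (rescaledDist δ)) (𝓝[>] 0 ×ˢ 𝓝 p) (𝓝 (dx p.1 p.2.1 p.2.2)))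
    (hA4 : ∀ p, Tendsto (uncurry (approxDiff δ)) (𝓝[>] 0 ×ˢ 𝓝 p) (𝓝 (ΔL p.1 p.2.1 p.2.2)))
    (x a v w : X) :
    dx x (ΔL x a v) (ΔL x a w) = dx x v w := by
  have hdiff : ∀ p, Tendsto (fun ε => approxDiff δ ε p) (𝓝[>] 0) (𝓝 (ΔL p.1 p.2.1 p.2.2)) :=
    fun p => (hA4 p).comp (tendsto_id.prodMk tendsto_const_nhds)
  have hbase : Tendsto (fun ε => δ ε x a) (𝓝[>] 0) (𝓝 x) :=
    (tendsto_dilation_of_rescaledDist hfix hA3 (x, a, x)).comp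
      (tendsto_id.prodMk tendsto_const_nhds)
  have hlhs := (hA3 (x, ΔL x a v, ΔL x a w)).comp
    (tendsto_id.prodMk (hbase.prodMk_nhds ((hdiff (x, a, v)).prodMk_nhds (hdiff (x, a, w)))))
  have hrhs := (hA3 (x, v, w)).comp (tendsto_id.prodMk tendsto_const_nhds)
  refine tendsto_nhds_unique (hlhs.congr' ?_) hrhs
  filter_upwards [self_mem_nhdsWithin] with ε hε
  exact rescaledDist_approxDiff hcomp hone hε x a v w

end DilationStructure

theorem sum_limit_exists_and_is_isometry_general
    {X : Type*} [MetricSpace X] [LocallyCompactSpace X]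
    (δ : ℝ → X → X → X)
    (hcomp : ∀ ε μ : ℝ, 0 < ε → 0 < μ → ∀ x y : X, δ ε x (δ μ x y) = δ (ε * μ) x y)
    (hone : ∀ x y : X, δ 1 x y = y)
    (hfix : ∀ ε : ℝ, 0 < ε → ∀ x : X, δ ε x x = x)
    (hcont : ContinuousOn (fun p : ℝ × X × X => δ p.1 p.2.1 p.2.2) {p | 0 < p.1})
    (dx : X → X → X → ℝ)
    (hA3 : ∀ K : Set (X × X × X), IsCompact K →
      TendstoUniformlyOn
        (fun (ε : ℝ) (p : X × X × X) => (1 / ε) * dist (δ ε p.1 p.2.1) (δ ε p.1 p.2.2))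
        (fun p => dx p.1 p.2.1 p.2.2) (𝓝[>] (0 : ℝ)) K)
    (ΔL : X → X → X → X)
    (hA4 : ∀ K : Set (X × X × X), IsCompact K →
      TendstoUniformlyOn
        (fun (ε : ℝ) (p : X × X × X) => δ ε⁻¹ (δ ε p.1 p.2.1) (δ ε p.1 p.2.2))
        (fun p => ΔL p.1 p.2.1 p.2.2) (𝓝[>] (0 : ℝ)) K) :
    ∃ SigL : X → X → X → X,
      (∀ x u v : X, ΔL x u (SigL x u v) = v ∧ SigL x u (ΔL x u v) = v) ∧
      (∀ K : Set (X × X × X), IsCompact K →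
        TendstoUniformlyOn
          (fun (ε : ℝ) (p : X × X × X) => δ ε⁻¹ p.1 (δ ε (δ ε p.1 p.2.1) p.2.2))
          (fun p => SigL p.1 p.2.1 p.2.2) (𝓝[>] (0 : ℝ)) K) ∧
      (∀ x u v w : X, dx x (SigL x u v) (SigL x u w) = dx x v w) := by
  have hpos : ∀ᶠ ε : ℝ in 𝓝[>] 0, 0 < ε := self_mem_nhdsWithin
  have hA3' : TendstoLocallyUniformly (rescaledDist δ) (fun p => dx p.1 p.2.1 p.2.2) (𝓝[>] 0) :=
    tendstoLocallyUniformly_iff_forall_isCompact.2 hA3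
  have hA4' : TendstoLocallyUniformly (approxDiff δ) (fun p => ΔL p.1 p.2.1 p.2.2) (𝓝[>] 0) :=
    tendstoLocallyUniformly_iff_forall_isCompact.2 hA4
  have hdx := hA3'.continuous (hpos.mono fun _ hε => continuous_rescaledDist hcont hε).frequently
  have hΔ := hA4'.continuous (hpos.mono fun _ hε => continuous_approxDiff hcont hε).frequently
  have hA3J := (tendstoLocallyUniformly_iff_forall_tendsto_uncurry hdx).1 hA3'
  have hA4J := (tendstoLocallyUniformly_iff_forall_tendsto_uncurry hΔ).1 hA4'
  have hSumJ := tendsto_approxSum hcomp hone hfix hA3J hA4J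
  have hSumC : Continuous fun p : X × X × X => ΔL p.1 (ΔL p.1 p.2.1 p.1) p.2.2 := by fun_prop
  refine ⟨fun x u v => ΔL x (ΔL x u x) v, fun x u v => ⟨?_, ?_⟩, fun K hK => ?_,
    fun x u v w => dist_limit_approxDiff_eq hcomp hone hfix hA3J hA4J x _ v w⟩
  · exact eq_of_tendsto_uncurry_of_eventually_eq hA4J hSumJ
      (hpos.mono fun _ hε => approxDiff_approxSum hcomp hone hε) x u v
  · exact eq_of_tendsto_uncurry_of_eventually_eq hSumJ hA4J
      (hpos.mono fun _ hε => approxSum_approxDiff hcomp hone hε) x u v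
  · exact tendstoLocallyUniformly_iff_forall_isCompact.1
      ((tendstoLocallyUniformly_iff_forall_tendsto_uncurry hSumC).2 hSumJ) K hK

/-- If moreover every `d^x` is nondegenerate, then each `Δ^x(u, ·)`
is invertible; its inverse `Σ^x(u, ·)` is the limit of `Σ_ε^x(u, ·)` as ε → 0+,
uniformly on compact sets, and each `Σ^x(u, ·)` is a `d^x`-isometry. -/
theorem sum_limit_exists_and_is_isometry
    {X : Type*} [MetricSpace X] [CompleteSpace X] [LocallyCompactSpace X]
    (δ : ℝ → X → X → X)
    (hcomp : ∀ ε μ : ℝ, 0 < ε → 0 < μ → ∀ x y : X, δ ε x (δ μ x y) = δ (ε * μ) x y)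
    (hone : ∀ x y : X, δ 1 x y = y)
    (hfix : ∀ ε : ℝ, 0 < ε → ∀ x : X, δ ε x x = x)
    (hcont : ContinuousOn (fun p : ℝ × X × X => δ p.1 p.2.1 p.2.2) {p | 0 < p.1})
    (hlim0 : ∀ x y : X, Tendsto (fun ε : ℝ => δ ε x y) (𝓝[>] (0 : ℝ)) (𝓝 x))
    (dx : X → X → X → ℝ)
    (hA3 : ∀ K : Set (X × X × X), IsCompact K →
      TendstoUniformlyOn
        (fun (ε : ℝ) (p : X × X × X) => (1 / ε) * dist (δ ε p.1 p.2.1) (δ ε p.1 p.2.2))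
        (fun p => dx p.1 p.2.1 p.2.2) (𝓝[>] (0 : ℝ)) K)
    (ΔL : X → X → X → X)
    (hA4 : ∀ K : Set (X × X × X), IsCompact K →
      TendstoUniformlyOn
        (fun (ε : ℝ) (p : X × X × X) => δ ε⁻¹ (δ ε p.1 p.2.1) (δ ε p.1 p.2.2))
        (fun p => ΔL p.1 p.2.1 p.2.2) (𝓝[>] (0 : ℝ)) K)
    (hnd : ∀ x v w : X, dx x v w = 0 → v = w) :
    ∃ SigL : X → X → X → X,
      (∀ x u v : X, ΔL x u (SigL x u v) = v ∧ SigL x u (ΔL x u v) = v) ∧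
      (∀ K : Set (X × X × X), IsCompact K →
        TendstoUniformlyOn
          (fun (ε : ℝ) (p : X × X × X) => δ ε⁻¹ p.1 (δ ε (δ ε p.1 p.2.1) p.2.2))
          (fun p => SigL p.1 p.2.1 p.2.2) (𝓝[>] (0 : ℝ)) K) ∧
      (∀ x u v w : X, dx x (SigL x u v) (SigL x u w) = dx x v w) :=
  sum_limit_exists_and_is_isometry_general δ hcomp hone hfix hcont dx hA3 ΔL hA4
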